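/- Let g be a metric field on an open set Ω ⊆ ℝ⁴, φ : Ω → ℝ smooth, and U : ℝ → ℝ continuously differentiable. Define T_{αβ} := ∂_α φ ∂_β φ − ((1/2) h^{μν} ∂_μ φ ∂_ν φ + U(φ)) g_{αβ}. Then for every β = 0,1,2,3, the covariant divergence of T satisfies the pointwise identity h^{αλ} (∂_λ T_{αβ} − Γ^δ_{λα} T_{δβ} − Γ^δ_{λβ} T_{αδ}) = (□_g φ − U'(φ)) ∂_β φ. In particular, if φ satisfies the Klein–Gordon equation □_g φ = U'(φ), then T is divergence-free. -/

import Mathlib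

noncomputable section

open scoped BigOperators
open Real

/-- Points of `ℝ⁴`. -/
abbrev Pt : Type := Fin 4 → ℝ

/-- A metric field: a map from points to 4×4 real matrices. -/
abbrev Met : Type := Pt → Matrix (Fin 4) (Fin 4) ℝ

/-- Partial derivative `∂_α u` of a scalar function on `ℝ⁴`. -/
noncomputable def pd (α : Fin 4) (u : Pt → ℝ) (x : Pt) : ℝ :=
  fderiv ℝ u x (Pi.single α 1)

/-- The pointwise inverse metric `h = g⁻¹`. -/
noncomputable def ginv (g : Met) (x : Pt) : Matrix (Fin 4) (Fin 4) ℝ := (g x)⁻¹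

/-- `g` is a metric field on `Ω`: smooth, symmetric and invertible there. -/
def IsMetricOn (g : Met) (Ω : Set Pt) : Prop :=
  (∀ α β : Fin 4, ContDiffOn ℝ (⊤ : ℕ∞) (fun x => g x α β) Ω) ∧
  (∀ x ∈ Ω, (g x).IsSymm) ∧
  (∀ x ∈ Ω, IsUnit (g x).det)

/-- Christoffel symbols `Γ^λ_{αβ}`. -/
noncomputable def Chr (g : Met) (lam α β : Fin 4) (x : Pt) : ℝ :=
  (1/2) * ∑ μ : Fin 4, ginv g x lam μ *
    (pd α (fun y => g y β μ) x + pd β (fun y => g y α μ) x - pd μ (fun y => g y α β) x)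

/-- Ricci curvature `R_{αβ} = ∂_λ Γ^λ_{αβ} − ∂_α Γ^λ_{βλ} + Γ^λ_{αβ} Γ^δ_{λδ} − Γ^λ_{αδ} Γ^δ_{βλ}`. -/
noncomputable def Ric (g : Met) (α β : Fin 4) (x : Pt) : ℝ :=
  (∑ lam : Fin 4, pd lam (Chr g lam α β) x)
  - (∑ lam : Fin 4, pd α (Chr g lam β lam) x)
  + (∑ lam : Fin 4, ∑ δ : Fin 4, Chr g lam α β x * Chr g δ lam δ x)
  - (∑ lam : Fin 4, ∑ δ : Fin 4, Chr g lam α δ x * Chr g δ β lam x)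

/-- Scalar curvature `R = h^{αβ} R_{αβ}`. -/
noncomputable def Scal (g : Met) (x : Pt) : ℝ :=
  ∑ α : Fin 4, ∑ β : Fin 4, ginv g x α β * Ric g α β x

/-- Covariant Hessian of a scalar: `∇_α∇_β u = ∂_α∂_β u − Γ^λ_{αβ} ∂_λ u`. -/
noncomputable def covHess (g : Met) (u : Pt → ℝ) (α β : Fin 4) (x : Pt) : ℝ :=
  pd α (pd β u) x - ∑ lam : Fin 4, Chr g lam α β x * pd lam u x

/-- Geometric wave operator `□_g u = h^{αβ} ∇_α∇_β u`. -/
noncomputable def boxg (g : Met) (u : Pt → ℝ) (x : Pt) : ℝ :=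
  ∑ α : Fin 4, ∑ β : Fin 4, ginv g x α β * covHess g u α β x

/-- The scalar-field energy–momentum tensor
`T_{αβ} = ∂_α φ ∂_β φ − ((1/2) h^{μν} ∂_μ φ ∂_ν φ + U(φ)) g_{αβ}`. -/
noncomputable def Tem (g : Met) (φ : Pt → ℝ) (U : ℝ → ℝ) (α β : Fin 4) (x : Pt) : ℝ :=
  pd α φ x * pd β φ x -
    ((1/2) * (∑ μ : Fin 4, ∑ ν : Fin 4, ginv g x μ ν * pd μ φ x * pd ν φ x) + U (φ x))
      * g x α β

/-- Covariant divergence of `T`, lowered index `β`: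
`h^{αλ} (∂_λ T_{αβ} − Γ^δ_{λα} T_{δβ} − Γ^δ_{λβ} T_{αδ})`. -/
noncomputable def divT (g : Met) (φ : Pt → ℝ) (U : ℝ → ℝ) (β : Fin 4) (x : Pt) : ℝ :=
  ∑ α : Fin 4, ∑ lam : Fin 4, ginv g x α lam *
    (pd lam (fun y => Tem g φ U α β y) x
      - (∑ δ : Fin 4, Chr g δ lam α x * Tem g φ U δ β x)
      - (∑ δ : Fin 4, Chr g δ lam β x * Tem g φ U α δ x))

theorem pd_congr {f g : Pt → ℝ} {x : Pt} (h : f =ᶠ[nhds x] g) (α : Fin 4) :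
    pd α f x = pd α g x := by
  unfold pd; rw [Filter.EventuallyEq.fderiv_eq h]

theorem pd_add {f g : Pt → ℝ} {x : Pt} (hf : DifferentiableAt ℝ f x)
    (hg : DifferentiableAt ℝ g x) (α : Fin 4) :
    pd α (fun y => f y + g y) x = pd α f x + pd α g x := by
  unfold pd; rw [fderiv_fun_add hf hg]; simp

theorem pd_sub {f g : Pt → ℝ} {x : Pt} (hf : DifferentiableAt ℝ f x)
    (hg : DifferentiableAt ℝ g x) (α : Fin 4) :
    pd α (fun y => f y - g y) x = pd α f x - pd α g x := by
  unfold pd; rw [fderiv_fun_sub hf hg]; simp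

theorem pd_mul {f g : Pt → ℝ} {x : Pt} (hf : DifferentiableAt ℝ f x)
    (hg : DifferentiableAt ℝ g x) (α : Fin 4) :
    pd α (fun y => f y * g y) x = pd α f x * g x + f x * pd α g x := by
  unfold pd; rw [fderiv_fun_mul hf hg]; simp; ring

theorem pd_const (c : ℝ) (x : Pt) (α : Fin 4) : pd α (fun _ => c) x = 0 := by
  unfold pd; simp

theorem pd_const_mul {f : Pt → ℝ} {x : Pt} (hf : DifferentiableAt ℝ f x) (c : ℝ) (α : Fin 4) :
    pd α (fun y => c * f y) x = c * pd α f x := by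
  unfold pd; rw [fderiv_const_mul hf]; simp

theorem pd_sum {s : Finset (Fin 4)} {f : Fin 4 → Pt → ℝ} {x : Pt}
    (hf : ∀ i ∈ s, DifferentiableAt ℝ (f i) x) (α : Fin 4) :
    pd α (fun y => ∑ i ∈ s, f i y) x = ∑ i ∈ s, pd α (f i) x := by
  unfold pd; rw [fderiv_fun_sum hf]; simp

theorem pd_comp {U : ℝ → ℝ} {φ : Pt → ℝ} {x : Pt} (hU : DifferentiableAt ℝ U (φ x))
    (hφ : DifferentiableAt ℝ φ x) (α : Fin 4) :
    pd α (fun y => U (φ y)) x = deriv U (φ x) * pd α φ x := by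
  unfold pd
  rw [show (fun y => U (φ y)) = U ∘ φ from rfl, fderiv_comp x hU hφ]
  simp only [Function.comp_apply, ContinuousLinearMap.coe_comp']
  rw [show (fderiv ℝ φ x) (Pi.single α 1) = ((fderiv ℝ φ x) (Pi.single α 1)) • (1:ℝ) by simp,
    (fderiv ℝ U (φ x)).map_smul]
  simp [fderiv_apply_one_eq_deriv]; ring

theorem contDiffAt_matrix_det {M : Pt → Matrix (Fin 4) (Fin 4) ℝ} {x : Pt}
    (h : ∀ i j, ContDiffAt ℝ (⊤ : ℕ∞) (fun y => M y i j) x) :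
    ContDiffAt ℝ (⊤ : ℕ∞) (fun y => (M y).det) x := by
  simp only [Matrix.det_apply]
  apply ContDiffAt.sum
  intro σ _
  simp only [Units.smul_def, zsmul_eq_mul]
  exact ContDiffAt.mul contDiffAt_const (contDiffAt_prod (fun i _ => h (σ i) i))

theorem contDiffAt_ginv {g : Met} {Ω : Set Pt} (hΩ : IsOpen Ω) (hg : IsMetricOn g Ω)
    {x : Pt} (hx : x ∈ Ω) (μ ν : Fin 4) :
    ContDiffAt ℝ (⊤ : ℕ∞) (fun y => ginv g y μ ν) x := by
  have hent : ∀ i j, ContDiffAt ℝ (⊤ : ℕ∞) (fun y => g y i j) x := fun i j =>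
    (hg.1 i j).contDiffAt (hΩ.mem_nhds hx)
  have key : (fun y => ginv g y μ ν)
      = fun y => (g y).adjugate μ ν * ((g y).det)⁻¹ := by
    funext y
    rw [ginv, Matrix.inv_def, Ring.inverse_eq_inv]
    simp [Matrix.smul_apply, smul_eq_mul]; ring
  rw [key]
  apply ContDiffAt.mul
  · simp only [Matrix.adjugate_apply]
    apply contDiffAt_matrix_det
    intro i j
    by_cases hi : i = ν
    · simp only [Matrix.updateRow_apply, hi, if_pos rfl]; exact contDiffAt_const
    · simp only [Matrix.updateRow_apply, if_neg hi]; exact hent i j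
  · exact (contDiffAt_matrix_det hent).inv (IsUnit.ne_zero (hg.2.2 x hx))

theorem contDiffAt_pd {φ : Pt → ℝ} {x : Pt} (hφ : ContDiffAt ℝ (⊤ : ℕ∞) φ x) (β : Fin 4) :
    ContDiffAt ℝ (⊤ : ℕ∞) (fun y => pd β φ y) x := by
  have h1 : ContDiffAt ℝ (⊤ : ℕ∞) (fderiv ℝ φ) x := hφ.fderiv_right (by simp)
  exact h1.clm_apply contDiffAt_const

theorem pd_pd_symm {φ : Pt → ℝ} {x : Pt} (hφ : ContDiffAt ℝ (⊤ : ℕ∞) φ x) (α β : Fin 4) :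
    pd α (pd β φ) x = pd β (pd α φ) x := by
  have h1 : ContDiffAt ℝ (⊤ : ℕ∞) (fderiv ℝ φ) x := hφ.fderiv_right (by simp)
  have hd : DifferentiableAt ℝ (fderiv ℝ φ) x := h1.differentiableAt (by simp)
  have key : ∀ γ δ : Fin 4, pd γ (pd δ φ) x
      = fderiv ℝ (fderiv ℝ φ) x (Pi.single γ 1) (Pi.single δ 1) := by
    intro γ δ
    have h2 : pd δ φ = fun y => (fderiv ℝ φ y) (Pi.single δ 1) := rfl
    show fderiv ℝ (pd δ φ) x (Pi.single γ 1) = _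
    rw [h2, fderiv_clm_apply hd (differentiableAt_const (Pi.single δ (1:ℝ)))]
    simp
  rw [key, key]
  exact (hφ.isSymmSndFDerivAt (by simp; exact WithTop.coe_le_coe.mpr le_top)) _ _

private lemma sum_pair_swap (F : Fin 4 → Fin 4 → Fin 4 → Fin 4 → ℝ) :
    ∑ a, ∑ b, ∑ c, ∑ d, F a b c d = ∑ a, ∑ b, ∑ c, ∑ d, F c d a b := by
  have e : ∀ (F : Fin 4 → Fin 4 → Fin 4 → Fin 4 → ℝ),
      ∑ p : Fin 4 × Fin 4, ∑ q : Fin 4 × Fin 4, F p.1 p.2 q.1 q.2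
        = ∑ a, ∑ b, ∑ c, ∑ d, F a b c d := by
    intro F
    rw [← Finset.univ_product_univ (α := Fin 4), Finset.sum_product]
    exact Finset.sum_congr rfl fun a _ => Finset.sum_congr rfl fun b _ =>
      Finset.sum_product _ _ _
  rw [← e, ← e ((fun a b c d => F c d a b))]
  exact Finset.sum_comm

theorem core_identity (H G : Fin 4 → Fin 4 → ℝ) (dG : Fin 4 → Fin 4 → Fin 4 → ℝ)
    (D : Fin 4 → Fin 4 → ℝ) (dH : Fin 4 → Fin 4 → Fin 4 → ℝ)
    (C : Fin 4 → Fin 4 → Fin 4 → ℝ) (Q : Fin 4 → ℝ)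
    (p : Fin 4 → ℝ) (S V' : ℝ) (β : Fin 4)
    (h1 : ∀ ρ ν, ∑ μ, G ρ μ * H μ ν = if ρ = ν then (1:ℝ) else 0)
    (hH : ∀ a b, H a b = H b a) (hG : ∀ a b, G a b = G b a)
    (hdG : ∀ l a b, dG l a b = dG l b a) (hD : ∀ a b, D a b = D b a)
    (hdH : ∀ l s n, dH l s n = -∑ r, ∑ m, H s r * dG l r m * H m n)
    (hC : ∀ d l a, C d l a = (1/2) * ∑ μ, H d μ * (dG l a μ + dG a l μ - dG μ l a))
    (hQ : ∀ l, Q l = (1/2) * (∑ μ, ∑ ν, (dH l μ ν * p μ * p ν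
        + H μ ν * (D l μ * p ν + p μ * D l ν))) + V' * p l) :
    ∑ α, ∑ l, H α l *
      ((D l α * p β + p α * D l β - Q l * G α β - S * dG l α β)
       - (∑ δ, C δ l α * (p δ * p β - S * G δ β))
       - (∑ δ, C δ l β * (p α * p δ - S * G α δ)))
    = ((∑ α, ∑ l, H α l * (D α l - ∑ δ, C δ α l * p δ)) - V') * p β := by
  have hCs : ∀ d a b, C d a b = C d b a := by
    intro d a b
    rw [hC, hC]
    congr 1
    refine Finset.sum_congr rfl fun μ _ => ?_
    rw [hdG μ a b]
    ring
  -- Step 1: split the left-hand side into eight groups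
  have split : (∑ α, ∑ l, H α l *
      ((D l α * p β + p α * D l β - Q l * G α β - S * dG l α β)
       - (∑ δ, C δ l α * (p δ * p β - S * G δ β))
       - (∑ δ, C δ l β * (p α * p δ - S * G α δ))))
      = (∑ α, ∑ l, H α l * D l α * p β) + (∑ α, ∑ l, H α l * p α * D l β)
        - (∑ α, ∑ l, Q l * (G β α * H α l))
        - (∑ α, ∑ l, S * (H α l * dG l α β))
        - (∑ α, ∑ l, (H α l * (∑ δ, C δ l α * p δ)) * p β)
        + (∑ α, ∑ l, S * (H α l * (∑ δ, C δ l α * G δ β)))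
        - (∑ α, ∑ l, H α l * p α * (∑ δ, C δ l β * p δ))
        + (∑ α, ∑ l, S * (H α l * (∑ δ, C δ l β * G α δ))) := by
    calc ∑ α, ∑ l, H α l *
      ((D l α * p β + p α * D l β - Q l * G α β - S * dG l α β)
       - (∑ δ, C δ l α * (p δ * p β - S * G δ β))
       - (∑ δ, C δ l β * (p α * p δ - S * G α δ)))
        = ∑ α, ∑ l, (H α l * D l α * p β + H α l * p α * D l β
            - Q l * (G β α * H α l) - S * (H α l * dG l α β)
            - (H α l * (∑ δ, C δ l α * p δ)) * p β
            + S * (H α l * (∑ δ, C δ l α * G δ β))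
            - H α l * p α * (∑ δ, C δ l β * p δ)
            + S * (H α l * (∑ δ, C δ l β * G α δ))) := by
          refine Finset.sum_congr rfl fun α _ => Finset.sum_congr rfl fun l _ => ?_
          have eδ1 : ∑ δ, C δ l α * (p δ * p β - S * G δ β)
              = (∑ δ, C δ l α * p δ) * p β - S * (∑ δ, C δ l α * G δ β) := by
            rw [Finset.sum_mul, Finset.mul_sum, ← Finset.sum_sub_distrib]
            exact Finset.sum_congr rfl fun δ _ => by ring
          have eδ2 : ∑ δ, C δ l β * (p α * p δ - S * G α δ)
              = p α * (∑ δ, C δ l β * p δ) - S * (∑ δ, C δ l β * G α δ) := by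
            rw [Finset.mul_sum, Finset.mul_sum, ← Finset.sum_sub_distrib]
            exact Finset.sum_congr rfl fun δ _ => by ring
          rw [eδ1, eδ2, hG α β]
          ring
      _ = _ := by simp only [Finset.sum_add_distrib, Finset.sum_sub_distrib]
  rw [split]
  -- group computations
  have I1 : (∑ α, ∑ l, H α l * D l α * p β) = (∑ α, ∑ l, H α l * D α l) * p β := by
    simp only [Finset.sum_mul]
    exact Finset.sum_congr rfl fun α _ => Finset.sum_congr rfl fun l _ => by rw [hD l α]
  have I2 : (∑ α, ∑ l, H α l * p α * D l β) = ∑ μ, ∑ ν, H μ ν * D β μ * p ν := by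
    rw [Finset.sum_comm]
    refine Finset.sum_congr rfl fun a _ => Finset.sum_congr rfl fun b _ => ?_
    rw [hH b a, hD a β]; ring
  have I3 : (∑ α, ∑ l, Q l * (G β α * H α l)) = Q β := by
    rw [Finset.sum_comm]
    have e : ∀ l, (∑ α, Q l * (G β α * H α l)) = Q l * (if β = l then (1:ℝ) else 0) := by
      intro l
      rw [← Finset.mul_sum, h1 β l]
    rw [Finset.sum_congr rfl fun l _ => e l]
    simp
  have hQβ : Q β = (1/2) * (∑ μ, ∑ ν, dH β μ ν * p μ * p ν)
      + (∑ μ, ∑ ν, H μ ν * D β μ * p ν) + V' * p β := by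
    rw [hQ β]
    have e : (∑ μ, ∑ ν, (dH β μ ν * p μ * p ν + H μ ν * (D β μ * p ν + p μ * D β ν)))
        = (∑ μ, ∑ ν, dH β μ ν * p μ * p ν) + ((∑ μ, ∑ ν, H μ ν * D β μ * p ν)
          + (∑ μ, ∑ ν, H μ ν * (p μ * D β ν))) := by
      calc (∑ μ, ∑ ν, (dH β μ ν * p μ * p ν + H μ ν * (D β μ * p ν + p μ * D β ν)))
          = ∑ μ, ∑ ν, (dH β μ ν * p μ * p ν
              + (H μ ν * D β μ * p ν + H μ ν * (p μ * D β ν))) :=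
            Finset.sum_congr rfl fun μ _ => Finset.sum_congr rfl fun ν _ => by ring
        _ = _ := by simp only [Finset.sum_add_distrib]
    have e2 : (∑ μ, ∑ ν, H μ ν * (p μ * D β ν)) = ∑ μ, ∑ ν, H μ ν * D β μ * p ν := by
      rw [Finset.sum_comm]
      refine Finset.sum_congr rfl fun a _ => Finset.sum_congr rfl fun b _ => ?_
      rw [hH b a]; ring
    rw [e, e2]; ring
  have hB4 : (∑ α, ∑ l, S * (H α l * dG l α β))
      = S * ∑ α, ∑ l, H α l * dG l α β := by
    simp only [← Finset.mul_sum]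
  have E6 : ∀ α l, (∑ δ, C δ l α * G δ β)
      = (1/2) * (dG l α β + dG α l β - dG β l α) := by
    intro α l
    calc (∑ δ, C δ l α * G δ β)
        = ∑ δ, ∑ μ, (G β δ * H δ μ) * ((1/2) * (dG l α μ + dG α l μ - dG μ l α)) := by
          refine Finset.sum_congr rfl fun δ _ => ?_
          rw [hC δ l α, hG δ β]
          simp only [Finset.mul_sum, Finset.sum_mul]
          exact Finset.sum_congr rfl fun μ _ => by ring
      _ = ∑ μ, (∑ δ, G β δ * H δ μ) * ((1/2) * (dG l α μ + dG α l μ - dG μ l α)) := by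
          rw [Finset.sum_comm]
          exact Finset.sum_congr rfl fun μ _ => (Finset.sum_mul _ _ _).symm
      _ = ∑ μ, (if β = μ then (1:ℝ) else 0) * ((1/2) * (dG l α μ + dG α l μ - dG μ l α)) :=
          Finset.sum_congr rfl fun μ _ => by rw [h1 β μ]
      _ = (1/2) * (dG l α β + dG α l β - dG β l α) := by simp
  have hB6 : (∑ α, ∑ l, S * (H α l * (∑ δ, C δ l α * G δ β)))
      = S * (∑ α, ∑ l, H α l * dG l α β)
        - (1/2) * (S * (∑ α, ∑ l, H α l * dG β l α)) := by
    calc (∑ α, ∑ l, S * (H α l * (∑ δ, C δ l α * G δ β)))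
        = ∑ α, ∑ l, ((1/2) * (S * (H α l * dG l α β)) + (1/2) * (S * (H α l * dG α l β))
            - (1/2) * (S * (H α l * dG β l α))) := by
          refine Finset.sum_congr rfl fun α _ => Finset.sum_congr rfl fun l _ => ?_
          rw [E6 α l]; ring
      _ = (1/2) * (S * (∑ α, ∑ l, H α l * dG l α β))
          + (1/2) * (S * (∑ α, ∑ l, H α l * dG α l β))
          - (1/2) * (S * (∑ α, ∑ l, H α l * dG β l α)) := by
          simp only [Finset.sum_add_distrib, Finset.sum_sub_distrib, ← Finset.mul_sum]
      _ = _ := by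
          have eX : (∑ α, ∑ l, H α l * dG α l β) = ∑ α, ∑ l, H α l * dG l α β := by
            rw [Finset.sum_comm]
            refine Finset.sum_congr rfl fun a _ => Finset.sum_congr rfl fun b _ => ?_
            rw [hH b a]
          rw [eX]; ring
  have E8 : ∀ l, (∑ α, H α l * (∑ δ, C δ l β * G α δ)) = C l l β := by
    intro l
    calc (∑ α, H α l * (∑ δ, C δ l β * G α δ))
        = ∑ α, ∑ δ, (G δ α * H α l) * C δ l β := by
          refine Finset.sum_congr rfl fun α _ => ?_
          rw [Finset.mul_sum]
          exact Finset.sum_congr rfl fun δ _ => by rw [hG α δ]; ring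
      _ = ∑ δ, (∑ α, G δ α * H α l) * C δ l β := by
          rw [Finset.sum_comm]
          exact Finset.sum_congr rfl fun δ _ => (Finset.sum_mul _ _ _).symm
      _ = ∑ δ, (if δ = l then (1:ℝ) else 0) * C δ l β :=
          Finset.sum_congr rfl fun δ _ => by rw [h1 δ l]
      _ = C l l β := by simp
  have N2 : (∑ l, C l l β) = (1/2) * (∑ α, ∑ l, H α l * dG β l α) := by
    calc (∑ l, C l l β)
        = ∑ l, ∑ μ, ((1/2) * (H l μ * dG l β μ) + (1/2) * (H l μ * dG β l μ)
            - (1/2) * (H l μ * dG μ l β)) := by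
          refine Finset.sum_congr rfl fun l _ => ?_
          rw [hC l l β, Finset.mul_sum]
          exact Finset.sum_congr rfl fun μ _ => by ring
      _ = (1/2) * (∑ l, ∑ μ, H l μ * dG l β μ) + (1/2) * (∑ l, ∑ μ, H l μ * dG β l μ)
          - (1/2) * (∑ l, ∑ μ, H l μ * dG μ l β) := by
          simp only [Finset.sum_add_distrib, Finset.sum_sub_distrib, ← Finset.mul_sum]
      _ = (1/2) * (∑ α, ∑ l, H α l * dG β l α) := by
          have e1 : (∑ l, ∑ μ, H l μ * dG μ l β) = ∑ l, ∑ μ, H l μ * dG l β μ := by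
            rw [Finset.sum_comm]
            refine Finset.sum_congr rfl fun a _ => Finset.sum_congr rfl fun b _ => ?_
            rw [hH b a, hdG a b β]
          have e2 : (∑ l, ∑ μ, H l μ * dG β l μ) = ∑ α, ∑ l, H α l * dG β l α := by
            rw [Finset.sum_comm]
            refine Finset.sum_congr rfl fun a _ => Finset.sum_congr rfl fun b _ => ?_
            rw [hH b a]
          rw [e1, e2]; ring
  have hB8 : (∑ α, ∑ l, S * (H α l * (∑ δ, C δ l β * G α δ)))
      = (1/2) * (S * (∑ α, ∑ l, H α l * dG β l α)) := by
    calc (∑ α, ∑ l, S * (H α l * (∑ δ, C δ l β * G α δ)))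
        = ∑ l, ∑ α, S * (H α l * (∑ δ, C δ l β * G α δ)) := Finset.sum_comm
      _ = ∑ l, S * C l l β := by
          refine Finset.sum_congr rfl fun l _ => ?_
          rw [← Finset.mul_sum, E8 l]
      _ = S * ∑ l, C l l β := by rw [← Finset.mul_sum]
      _ = _ := by rw [N2]; ring
  have I5 : (∑ α, ∑ l, (H α l * (∑ δ, C δ l α * p δ)) * p β)
      = (∑ α, ∑ l, H α l * (∑ δ, C δ α l * p δ)) * p β := by
    simp only [Finset.sum_mul]
    refine Finset.sum_congr rfl fun α _ => Finset.sum_congr rfl fun l _ => ?_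
    rw [show (∑ δ, C δ l α * p δ) = ∑ δ, C δ α l * p δ from
      Finset.sum_congr rfl fun δ _ => by rw [hCs δ l α]]
  have J1 : (∑ α, ∑ l, H α l * p α * (∑ δ, C δ l β * p δ))
      = (1/2) * (∑ a, ∑ b, ∑ c, ∑ d, H a b * H c d * p a * p c * dG β b d) := by
    calc (∑ α, ∑ l, H α l * p α * (∑ δ, C δ l β * p δ))
        = ∑ a, ∑ b, ∑ c, ∑ d, ((1/2) * (H a b * H c d * p a * p c * dG b β d)
            + (1/2) * (H a b * H c d * p a * p c * dG β b d)
            - (1/2) * (H a b * H c d * p a * p c * dG d b β)) := by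
          refine Finset.sum_congr rfl fun a _ => Finset.sum_congr rfl fun b _ => ?_
          simp only [hC, Finset.mul_sum, Finset.sum_mul]
          exact Finset.sum_congr rfl fun c _ => Finset.sum_congr rfl fun d _ => by ring
      _ = (1/2) * (∑ a, ∑ b, ∑ c, ∑ d, H a b * H c d * p a * p c * dG b β d)
          + (1/2) * (∑ a, ∑ b, ∑ c, ∑ d, H a b * H c d * p a * p c * dG β b d)
          - (1/2) * (∑ a, ∑ b, ∑ c, ∑ d, H a b * H c d * p a * p c * dG d b β) := by
          simp only [Finset.sum_add_distrib, Finset.sum_sub_distrib, ← Finset.mul_sum]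
      _ = _ := by
          have eT : (∑ a, ∑ b, ∑ c, ∑ d, H a b * H c d * p a * p c * dG d b β)
              = ∑ a, ∑ b, ∑ c, ∑ d, H a b * H c d * p a * p c * dG b β d := by
            calc (∑ a, ∑ b, ∑ c, ∑ d, H a b * H c d * p a * p c * dG d b β)
                = ∑ a, ∑ b, ∑ c, ∑ d, H a b * H c d * p a * p c * dG d β b := by
                  refine Finset.sum_congr rfl fun a _ => Finset.sum_congr rfl fun b _ =>
                    Finset.sum_congr rfl fun c _ => Finset.sum_congr rfl fun d _ => ?_
                  rw [hdG d b β]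
              _ = ∑ a, ∑ b, ∑ c, ∑ d, H c d * H a b * p c * p a * dG b β d :=
                  sum_pair_swap (fun a b c d => H a b * H c d * p a * p c * dG d β b)
              _ = ∑ a, ∑ b, ∑ c, ∑ d, H a b * H c d * p a * p c * dG b β d := by
                  refine Finset.sum_congr rfl fun a _ => Finset.sum_congr rfl fun b _ =>
                    Finset.sum_congr rfl fun c _ => Finset.sum_congr rfl fun d _ => ?_
                  ring
          rw [eT]; ring
  have J2 : (∑ μ, ∑ ν, dH β μ ν * p μ * p ν)
      = -(∑ a, ∑ b, ∑ c, ∑ d, H a b * H c d * p a * p c * dG β b d) := by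
    calc (∑ μ, ∑ ν, dH β μ ν * p μ * p ν)
        = ∑ a, ∑ c, ∑ b, ∑ d, (-(H a b * H c d * p a * p c * dG β b d)) := by
          refine Finset.sum_congr rfl fun a _ => Finset.sum_congr rfl fun c _ => ?_
          rw [hdH β a c]
          simp only [neg_mul, Finset.sum_mul, ← Finset.sum_neg_distrib]
          refine Finset.sum_congr rfl fun b _ => Finset.sum_congr rfl fun d _ => ?_
          rw [hH d c]; ring
      _ = ∑ a, ∑ b, ∑ c, ∑ d, (-(H a b * H c d * p a * p c * dG β b d)) :=
          Finset.sum_congr rfl fun a _ => Finset.sum_comm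
      _ = -(∑ a, ∑ b, ∑ c, ∑ d, H a b * H c d * p a * p c * dG β b d) := by
          simp only [Finset.sum_neg_distrib]
  have hRHS : (∑ α, ∑ l, H α l * (D α l - ∑ δ, C δ α l * p δ))
      = (∑ α, ∑ l, H α l * D α l) - (∑ α, ∑ l, H α l * (∑ δ, C δ α l * p δ)) := by
    simp only [mul_sub, Finset.sum_sub_distrib]
  rw [I1, I2, I3, hQβ, J2, hB4, I5, hB6, J1, hB8, hRHS]
  ring



theorem divT_eq (Ω : Set Pt) (hΩ : IsOpen Ω) (g : Met) (hg : IsMetricOn g Ω)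
    (φ : Pt → ℝ) (hφ : ContDiffOn ℝ (⊤ : ℕ∞) φ Ω) (U : ℝ → ℝ) (hU : ContDiff ℝ 1 U)
    {x : Pt} (hx : x ∈ Ω) (β : Fin 4) :
    divT g φ U β x = (boxg g φ x - deriv U (φ x)) * pd β φ x := by
  classical
  have hmem : Ω ∈ nhds x := hΩ.mem_nhds hx
  have hgC : ∀ a b, ContDiffAt ℝ (⊤ : ℕ∞) (fun y => g y a b) x := fun a b =>
    (hg.1 a b).contDiffAt hmem
  have hφC : ContDiffAt ℝ (⊤ : ℕ∞) φ x := hφ.contDiffAt hmem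
  have hinvC : ∀ a b, ContDiffAt ℝ (⊤ : ℕ∞) (fun y => ginv g y a b) x := fun a b =>
    contDiffAt_ginv hΩ hg hx a b
  have dg : ∀ a b, DifferentiableAt ℝ (fun y => g y a b) x := fun a b =>
    (hgC a b).differentiableAt (by simp)
  have dinv : ∀ a b, DifferentiableAt ℝ (fun y => ginv g y a b) x := fun a b =>
    (hinvC a b).differentiableAt (by simp)
  have dφ : DifferentiableAt ℝ φ x := hφC.differentiableAt (by simp)
  have dpd : ∀ a, DifferentiableAt ℝ (fun y => pd a φ y) x := fun a =>
    (contDiffAt_pd hφC a).differentiableAt (by simp)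
  have dU : DifferentiableAt ℝ (fun y => U (φ y)) x :=
    DifferentiableAt.comp x ((hU.differentiable (by simp)) (φ x)) dφ
  have dd : ∀ μ ν, DifferentiableAt ℝ (fun y => ginv g y μ ν * pd μ φ y * pd ν φ y) x :=
    fun μ ν => ((dinv μ ν).mul (dpd μ)).mul (dpd ν)
  have dsum1 : ∀ μ, DifferentiableAt ℝ (fun y => ∑ ν, ginv g y μ ν * pd μ φ y * pd ν φ y) x :=
    fun μ => DifferentiableAt.fun_sum (fun ν _ => dd μ ν)
  have dsum : DifferentiableAt ℝ (fun y => ∑ μ, ∑ ν, ginv g y μ ν * pd μ φ y * pd ν φ y) x :=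
    DifferentiableAt.fun_sum (fun μ _ => dsum1 μ)
  have dSfun : DifferentiableAt ℝ
      (fun y => (1/2) * (∑ μ, ∑ ν, ginv g y μ ν * pd μ φ y * pd ν φ y) + U (φ y)) x :=
    (dsum.const_mul _).add dU
  have hdet : IsUnit (g x).det := hg.2.2 x hx
  have h1 : ∀ ρ ν, (∑ μ, g x ρ μ * ginv g x μ ν) = if ρ = ν then (1:ℝ) else 0 := by
    intro ρ ν
    have h := Matrix.mul_nonsing_inv (g x) hdet
    calc (∑ μ, g x ρ μ * ginv g x μ ν) = ((g x) * (g x)⁻¹) ρ ν := (Matrix.mul_apply).symm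
      _ = (1 : Matrix (Fin 4) (Fin 4) ℝ) ρ ν := by rw [h]
      _ = _ := Matrix.one_apply
  have h1' : ∀ ρ ν, (∑ μ, ginv g x ρ μ * g x μ ν) = if ρ = ν then (1:ℝ) else 0 := by
    intro ρ ν
    have h := Matrix.nonsing_inv_mul (g x) hdet
    calc (∑ μ, ginv g x ρ μ * g x μ ν) = ((g x)⁻¹ * (g x)) ρ ν := (Matrix.mul_apply).symm
      _ = (1 : Matrix (Fin 4) (Fin 4) ℝ) ρ ν := by rw [h]
      _ = _ := Matrix.one_apply
  have hHs : ∀ a b, ginv g x a b = ginv g x b a := by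
    intro a b
    have hsymm : Matrix.transpose (g x) = g x := hg.2.1 x hx
    have hti : ((g x)⁻¹).IsSymm := by
      show Matrix.transpose ((g x)⁻¹) = (g x)⁻¹
      rw [Matrix.transpose_nonsing_inv, hsymm]
    exact (hti.apply a b).symm
  have hGs : ∀ a b, g x a b = g x b a :=
    fun a b => ((hg.2.1 x hx).apply a b).symm
  have hdGs : ∀ l a b, pd l (fun y => g y a b) x = pd l (fun y => g y b a) x := by
    intro l a b
    apply pd_congr
    filter_upwards [hmem] with y hy
    exact ((hg.2.1 y hy).apply a b).symm
  have hDs : ∀ a b, pd a (pd b φ) x = pd b (pd a φ) x := fun a b => pd_pd_symm hφC a b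
  have rel2 : ∀ l ρ ν, (∑ μ, g x ρ μ * pd l (fun y => ginv g y μ ν) x)
      = -∑ μ, pd l (fun y => g y ρ μ) x * ginv g x μ ν := by
    intro l ρ ν
    have hconst : (fun y => ∑ μ, g y ρ μ * ginv g y μ ν)
        =ᶠ[nhds x] (fun _ => if ρ = ν then (1:ℝ) else 0) := by
      filter_upwards [hmem] with y hy
      have h := Matrix.mul_nonsing_inv (g y) (hg.2.2 y hy)
      show (∑ μ, g y ρ μ * ginv g y μ ν) = _
      calc (∑ μ, g y ρ μ * ginv g y μ ν) = ((g y) * (g y)⁻¹) ρ ν := (Matrix.mul_apply).symm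
        _ = (1 : Matrix (Fin 4) (Fin 4) ℝ) ρ ν := by rw [h]
        _ = _ := Matrix.one_apply
    have h0 : pd l (fun y => ∑ μ, g y ρ μ * ginv g y μ ν) x = 0 := by
      rw [pd_congr hconst, pd_const]
    rw [pd_sum (fun μ _ => (dg ρ μ).fun_mul (dinv μ ν)) l] at h0
    rw [Finset.sum_congr rfl (fun μ _ => pd_mul (dg ρ μ) (dinv μ ν) l)] at h0
    rw [Finset.sum_add_distrib] at h0
    linarith
  have hdH : ∀ l s n, pd l (fun y => ginv g y s n) x
      = -∑ r, ∑ m, ginv g x s r * pd l (fun y => g y r m) x * ginv g x m n := by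
    intro l s n
    have delta : ∀ (f : Fin 4 → ℝ) (s : Fin 4),
        (∑ μ, (if s = μ then (1:ℝ) else 0) * f μ) = f s := by
      intro f s; simp
    calc pd l (fun y => ginv g y s n) x
        = ∑ μ, (if s = μ then (1:ℝ) else 0) * pd l (fun y => ginv g y μ n) x :=
          (delta (fun μ => pd l (fun y => ginv g y μ n) x) s).symm
      _ = ∑ μ, (∑ ρ, ginv g x s ρ * g x ρ μ) * pd l (fun y => ginv g y μ n) x :=
          Finset.sum_congr rfl fun μ _ => by rw [h1' s μ]
      _ = ∑ μ, ∑ ρ, ginv g x s ρ * (g x ρ μ * pd l (fun y => ginv g y μ n) x) := by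
          refine Finset.sum_congr rfl fun μ _ => ?_
          rw [Finset.sum_mul]
          exact Finset.sum_congr rfl fun ρ _ => by ring
      _ = ∑ ρ, ∑ μ, ginv g x s ρ * (g x ρ μ * pd l (fun y => ginv g y μ n) x) :=
          Finset.sum_comm
      _ = ∑ ρ, ginv g x s ρ * ∑ μ, g x ρ μ * pd l (fun y => ginv g y μ n) x :=
          Finset.sum_congr rfl fun ρ _ => (Finset.mul_sum _ _ _).symm
      _ = ∑ ρ, ginv g x s ρ * -∑ μ, pd l (fun y => g y ρ μ) x * ginv g x μ n :=
          Finset.sum_congr rfl fun ρ _ => by rw [rel2 l ρ n]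
      _ = -∑ r, ∑ m, ginv g x s r * pd l (fun y => g y r m) x * ginv g x m n := by
          rw [← Finset.sum_neg_distrib]
          refine Finset.sum_congr rfl fun r _ => ?_
          rw [mul_neg, Finset.mul_sum]
          exact neg_inj.mpr (Finset.sum_congr rfl fun m _ => by ring)
  have hQl : ∀ l, pd l (fun y => (1/2) * (∑ μ, ∑ ν, ginv g y μ ν * pd μ φ y * pd ν φ y) + U (φ y)) x
      = (1/2) * (∑ μ, ∑ ν, (pd l (fun y => ginv g y μ ν) x * pd μ φ x * pd ν φ x
          + ginv g x μ ν * (pd l (pd μ φ) x * pd ν φ x + pd μ φ x * pd l (pd ν φ) x)))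
        + deriv U (φ x) * pd l φ x := by
    intro l
    calc pd l (fun y => (1/2) * (∑ μ, ∑ ν, ginv g y μ ν * pd μ φ y * pd ν φ y) + U (φ y)) x
        = pd l (fun y => (1/2) * (∑ μ, ∑ ν, ginv g y μ ν * pd μ φ y * pd ν φ y)) x
            + pd l (fun y => U (φ y)) x := pd_add (dsum.const_mul _) dU l
      _ = (1/2) * pd l (fun y => ∑ μ, ∑ ν, ginv g y μ ν * pd μ φ y * pd ν φ y) x
            + deriv U (φ x) * pd l φ x := by
          rw [pd_const_mul dsum _ l, pd_comp ((hU.differentiable (by simp)) (φ x)) dφ l]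
      _ = (1/2) * (∑ μ, ∑ ν, pd l (fun y => ginv g y μ ν * pd μ φ y * pd ν φ y) x)
            + deriv U (φ x) * pd l φ x := by
          rw [pd_sum (fun μ _ => dsum1 μ) l,
            Finset.sum_congr rfl (fun μ _ => pd_sum (fun ν _ => dd μ ν) l)]
      _ = _ := by
          congr 1
          congr 1
          refine Finset.sum_congr rfl fun μ _ => Finset.sum_congr rfl fun ν _ => ?_
          rw [pd_mul ((dinv μ ν).fun_mul (dpd μ)) (dpd ν) l, pd_mul (dinv μ ν) (dpd μ) l]
          ring
  have dT : ∀ l α, pd l (fun y => Tem g φ U α β y) x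
      = pd l (pd α φ) x * pd β φ x + pd α φ x * pd l (pd β φ) x
        - (pd l (fun y => (1/2) * (∑ μ, ∑ ν, ginv g y μ ν * pd μ φ y * pd ν φ y) + U (φ y)) x)
            * g x α β
        - ((1/2) * (∑ μ, ∑ ν, ginv g x μ ν * pd μ φ x * pd ν φ x) + U (φ x))
            * pd l (fun y => g y α β) x := by
    intro l α
    have hTfun : (fun y => Tem g φ U α β y)
        = fun y => pd α φ y * pd β φ y
            - ((1/2) * (∑ μ, ∑ ν, ginv g y μ ν * pd μ φ y * pd ν φ y) + U (φ y)) * g y α β := rfl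
    rw [hTfun, pd_sub ((dpd α).fun_mul (dpd β)) (dSfun.fun_mul (dg α β)) l,
        pd_mul (dpd α) (dpd β) l, pd_mul dSfun (dg α β) l]
    ring
  have key := core_identity (fun a b => ginv g x a b) (fun a b => g x a b)
      (fun l a b => pd l (fun y => g y a b) x) (fun a b => pd a (pd b φ) x)
      (fun l a b => pd l (fun y => ginv g y a b) x)
      (fun d l a => Chr g d l a x)
      (fun l => pd l (fun y => (1/2) * (∑ μ, ∑ ν, ginv g y μ ν * pd μ φ y * pd ν φ y) + U (φ y)) x)
      (fun a => pd a φ x)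
      ((1/2) * (∑ μ, ∑ ν, ginv g x μ ν * pd μ φ x * pd ν φ x) + U (φ x))
      (deriv U (φ x)) β h1 hHs hGs hdGs hDs hdH (fun d l a => rfl) hQl
  calc divT g φ U β x
      = ∑ α, ∑ l, ginv g x α l *
          ((pd l (pd α φ) x * pd β φ x + pd α φ x * pd l (pd β φ) x
            - (pd l (fun y => (1/2) * (∑ μ, ∑ ν, ginv g y μ ν * pd μ φ y * pd ν φ y) + U (φ y)) x)
                * g x α β
            - ((1/2) * (∑ μ, ∑ ν, ginv g x μ ν * pd μ φ x * pd ν φ x) + U (φ x))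
                * pd l (fun y => g y α β) x)
           - (∑ δ, Chr g δ l α x * (pd δ φ x * pd β φ x
              - ((1/2) * (∑ μ, ∑ ν, ginv g x μ ν * pd μ φ x * pd ν φ x) + U (φ x)) * g x δ β))
           - (∑ δ, Chr g δ l β x * (pd α φ x * pd δ φ x
              - ((1/2) * (∑ μ, ∑ ν, ginv g x μ ν * pd μ φ x * pd ν φ x) + U (φ x)) * g x α δ))) := by
        show (∑ α, ∑ lam, ginv g x α lam *
          (pd lam (fun y => Tem g φ U α β y) x
            - (∑ δ, Chr g δ lam α x * Tem g φ U δ β x)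
            - (∑ δ, Chr g δ lam β x * Tem g φ U α δ x))) = _
        refine Finset.sum_congr rfl fun α _ => Finset.sum_congr rfl fun l _ => ?_
        rw [dT l α]
        rfl
      _ = ((∑ α, ∑ l, ginv g x α l * (pd α (pd l φ) x - ∑ δ, Chr g δ α l x * pd δ φ x))
            - deriv U (φ x)) * pd β φ x := key
      _ = (boxg g φ x - deriv U (φ x)) * pd β φ x := rfl

/-- For a metric field `g` on an open set `Ω ⊆ ℝ⁴`, a smooth `φ` and a
`C¹` potential `U`, the covariant divergence of the energy–momentum tensor satisfies
`h^{αλ}(∂_λ T_{αβ} − Γ^δ_{λα} T_{δβ} − Γ^δ_{λβ} T_{αδ}) = (□_g φ − U'(φ)) ∂_β φ` on `Ω`;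
in particular, if `φ` solves the Klein–Gordon equation `□_g φ = U'(φ)` on `Ω`, then `T`
is divergence-free on `Ω`. -/
theorem energy_momentum_divergence
    (Ω : Set Pt) (hΩ : IsOpen Ω) (g : Met) (hg : IsMetricOn g Ω)
    (φ : Pt → ℝ) (hφ : ContDiffOn ℝ (⊤ : ℕ∞) φ Ω)
    (U : ℝ → ℝ) (hU : ContDiff ℝ 1 U) :
    (∀ x ∈ Ω, ∀ β : Fin 4,
      divT g φ U β x = (boxg g φ x - deriv U (φ x)) * pd β φ x)
    ∧
    ((∀ x ∈ Ω, boxg g φ x = deriv U (φ x)) →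
      ∀ x ∈ Ω, ∀ β : Fin 4, divT g φ U β x = 0) := by
  constructor
  · intro x hx β
    exact divT_eq Ω hΩ g hg φ hφ U hU hx β
  · intro hKG x hx β
    rw [divT_eq Ω hΩ g hg φ hφ U hU hx β, hKG x hx, sub_self, zero_mul]
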